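/- Let p be a prime. Every group belonging to one of the families 𝒢₇, 𝒢₈, 𝒢₉ is indecomposable. -/

import Mathlib

/-- A group is indecomposable if whenever it is the internal direct product of two
subgroups `H` and `K`, one of them is trivial. -/
def IsIndecomposable (G : Type*) [Group G] : Prop :=
  ∀ H K : Subgroup G,
    (∀ h ∈ H, ∀ k ∈ K, Commute h k) →
    H ⊓ K = ⊥ →
    (∀ g : G, ∃ h ∈ H, ∃ k ∈ K, g = h * k) →
    H = ⊥ ∨ K = ⊥

/-- Membership in family 𝒢₇: `G = ⟨x, y, t₁, t₂, t₃⟩`, `Z(G) = ⟨t₁⟩ × ⟨t₂⟩ × ⟨t₃⟩`,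
`o(tᵢ) = p^{mᵢ}`, `x^p = t₂`, `y^p = t₃`, `[x,y] = t₁^{p^{m₁-1}}`. -/
def InFamilyG7 (p m₁ m₂ m₃ : ℕ) (G : Type*) [Group G] : Prop :=
  ∃ x y t₁ t₂ t₃ : G,
    Subgroup.closure {x, y, t₁, t₂, t₃} = ⊤ ∧
    Subgroup.center G = Subgroup.closure {t₁, t₂, t₃} ∧
    Subgroup.zpowers t₁ ⊓ Subgroup.closure {t₂, t₃} = ⊥ ∧
    Subgroup.zpowers t₂ ⊓ Subgroup.closure {t₁, t₃} = ⊥ ∧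
    Subgroup.zpowers t₃ ⊓ Subgroup.closure {t₁, t₂} = ⊥ ∧
    orderOf t₁ = p ^ m₁ ∧ orderOf t₂ = p ^ m₂ ∧ orderOf t₃ = p ^ m₃ ∧
    x ^ p = t₂ ∧ y ^ p = t₃ ∧
    x⁻¹ * y⁻¹ * x * y = t₁ ^ p ^ (m₁ - 1)

/-- Membership in family 𝒢₈: `G = ⟨x, y, t₁, t₂, u₁⟩`, `Z(G) = ⟨t₁⟩ × ⟨t₂⟩ × ⟨u₁⟩`,
`o(t₁) = p^{m₁}`, `o(t₂) = p^{m₂}`, `o(u₁) = ∞`, `x^p = t₂`, `y^p = u₁`,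
`[x,y] = t₁^{p^{m₁-1}}`. -/
def InFamilyG8 (p m₁ m₂ : ℕ) (G : Type*) [Group G] : Prop :=
  ∃ x y t₁ t₂ u₁ : G,
    Subgroup.closure {x, y, t₁, t₂, u₁} = ⊤ ∧
    Subgroup.center G = Subgroup.closure {t₁, t₂, u₁} ∧
    Subgroup.zpowers t₁ ⊓ Subgroup.closure {t₂, u₁} = ⊥ ∧
    Subgroup.zpowers t₂ ⊓ Subgroup.closure {t₁, u₁} = ⊥ ∧
    Subgroup.zpowers u₁ ⊓ Subgroup.closure {t₁, t₂} = ⊥ ∧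
    orderOf t₁ = p ^ m₁ ∧ orderOf t₂ = p ^ m₂ ∧ ¬ IsOfFinOrder u₁ ∧
    x ^ p = t₂ ∧ y ^ p = u₁ ∧
    x⁻¹ * y⁻¹ * x * y = t₁ ^ p ^ (m₁ - 1)

/-- Membership in family 𝒢₉: `G = ⟨x, y, t₁, u₁, u₂⟩`, `Z(G) = ⟨t₁⟩ × ⟨u₁⟩ × ⟨u₂⟩`,
`o(t₁) = p^{m₁}`, `o(u₁) = o(u₂) = ∞`, `x^p = u₁`, `y^p = u₂`,
`[x,y] = t₁^{p^{m₁-1}}`. -/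
def InFamilyG9 (p m₁ : ℕ) (G : Type*) [Group G] : Prop :=
  ∃ x y t₁ u₁ u₂ : G,
    Subgroup.closure {x, y, t₁, u₁, u₂} = ⊤ ∧
    Subgroup.center G = Subgroup.closure {t₁, u₁, u₂} ∧
    Subgroup.zpowers t₁ ⊓ Subgroup.closure {u₁, u₂} = ⊥ ∧
    Subgroup.zpowers u₁ ⊓ Subgroup.closure {t₁, u₂} = ⊥ ∧
    Subgroup.zpowers u₂ ⊓ Subgroup.closure {t₁, u₁} = ⊥ ∧
    orderOf t₁ = p ^ m₁ ∧ ¬ IsOfFinOrder u₁ ∧ ¬ IsOfFinOrder u₂ ∧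
    x ^ p = u₁ ∧ y ^ p = u₂ ∧
    x⁻¹ * y⁻¹ * x * y = t₁ ^ p ^ (m₁ - 1)

/-!
All commutators of `G` lie in `⟨[x, y]⟩ = ⟨t₁ ^ p ^ (m₁ - 1)⟩`, a central subgroup of order `p`.
Hence if `G = H × K`, the nontrivial commutators of `H` and of `K` would both generate it, so one
factor, say `K`, is abelian and therefore central, and the projection `π : G → K` is a retraction.
As `Z(G) = ⟨t₁⟩⟨x ^ p⟩⟨y ^ p⟩`, every `k = π k ∈ K` is `π(t₁) ^ i` times a `p`-th power in `K`.
Moreover `π(t₁) ^ p ^ (m₁ - 1) = π [x, y] = 1` forces the `t₁`-coordinate of `π(t₁)` to be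
divisible by `p`, so every element of `K` is a `p`-th power in `K`. But in
`Z(G) ≅ ℤ/p^{m₁} × ⟨x ^ p⟩ × ⟨y ^ p⟩`, a product of cyclic groups of `p`-power or infinite order,
no element other than `1` is a `p ^ n`-th power for all `n`, so `K = 1`.
-/

open Subgroup
open scoped commutatorElement

section

variable {G : Type*} [Group G]

def Subgroup.HasNoInfinitePHeight (p : ℕ) (A : Subgroup G) : Prop :=
  ∀ a ∈ A, (∀ n : ℕ, ∃ b ∈ A, b ^ p ^ n = a) → a = 1

theorem hasNoInfinitePHeight_zpowers_of_orderOf_eq {p m : ℕ} {g : G} (hg : orderOf g = p ^ m) :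
    (zpowers g).HasNoInfinitePHeight p := by
  rintro a - ha
  obtain ⟨b, hb, rfl⟩ := ha m
  rw [← hg, ← orderOf_dvd_iff_pow_eq_one]
  exact orderOf_dvd_of_mem_zpowers hb

theorem hasNoInfinitePHeight_zpowers_of_not_isOfFinOrder {p : ℕ} (hp : 1 < p) {g : G}
    (hg : ¬IsOfFinOrder g) : (zpowers g).HasNoInfinitePHeight p := by
  rintro a ha hdiv
  obtain ⟨k, rfl⟩ := mem_zpowers_iff.1 ha
  have hdvd (n : ℕ) : (p : ℤ) ^ n ∣ k := by
    obtain ⟨b, hb, hbk⟩ := hdiv n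
    obtain ⟨j, rfl⟩ := mem_zpowers_iff.1 hb
    refine ⟨j, injective_zpow_iff_not_isOfFinOrder.2 hg ?_⟩
    simpa [← zpow_natCast, ← zpow_mul, mul_comm] using hbk.symm
  obtain rfl : k = 0 := by
    by_contra hk
    obtain ⟨n, hn⟩ :=
      (Int.finiteMultiplicity_iff (a := p)).2 ⟨by rw [Int.natAbs_natCast]; exact hp.ne', hk⟩
    exact hn (hdvd (n + 1))
  exact zpow_zero g

theorem Subgroup.HasNoInfinitePHeight.sup {p : ℕ} {A B : Subgroup G}
    (hA : A.HasNoInfinitePHeight p) (hB : B.HasNoInfinitePHeight p) (hAB : A ≤ centralizer B)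
    (hdisj : A ⊓ B = ⊥) : (A ⊔ B).HasNoInfinitePHeight p := by
  have hmem : ∀ z ∈ A ⊔ B, ∃ a ∈ A, ∃ b ∈ B, a * b = z := fun z hz => by
    rwa [← SetLike.mem_coe, coe_mul_of_left_le_normalizer_right A B
      (hAB.trans (centralizer_le_normalizer _))] at hz
  have hunique {a a' b b' : G} (ha : a ∈ A) (ha' : a' ∈ A) (hb : b ∈ B) (hb' : b' ∈ B)
      (h : a * b = a' * b') : a = a' ∧ b = b' := by
    simpa [Prod.ext_iff] using mul_injective_of_disjoint (disjoint_iff.2 hdisj)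
      (a₁ := (⟨a, ha⟩, ⟨b, hb⟩)) (a₂ := (⟨a', ha'⟩, ⟨b', hb'⟩)) h
  rintro z hz hdiv
  obtain ⟨a, ha, b, hb, rfl⟩ := hmem z hz
  have hroots (n : ℕ) : (∃ a' ∈ A, a' ^ p ^ n = a) ∧ ∃ b' ∈ B, b' ^ p ^ n = b := by
    obtain ⟨c, hc, hcz⟩ := hdiv n
    obtain ⟨a', ha', b', hb', rfl⟩ := hmem c hc
    rw [Commute.mul_pow (mem_centralizer_iff.1 (hAB ha') b' hb').symm] at hcz
    obtain ⟨rfl, rfl⟩ := hunique ha (pow_mem ha' _) hb (pow_mem hb' _) hcz.symm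
    exact ⟨⟨a', ha', rfl⟩, b', hb', rfl⟩
  rw [hA a ha fun n => (hroots n).1, hB b hb fun n => (hroots n).2, one_mul]

theorem Subgroup.HasNoInfinitePHeight.eq_bot_of_le {p : ℕ} {A K : Subgroup G}
    (hA : A.HasNoInfinitePHeight p) (hKA : K ≤ A) (hK : ∀ k ∈ K, ∃ v ∈ K, v ^ p = k) : K = ⊥ := by
  have hroots (n : ℕ) : ∀ k ∈ K, ∃ v ∈ K, v ^ p ^ n = k := by
    induction n with
    | zero => exact fun k hk => ⟨k, hk, pow_one k⟩
    | succ n ih =>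
      intro k hk
      obtain ⟨v, hv, rfl⟩ := hK k hk
      obtain ⟨w, hw, rfl⟩ := ih v hv
      exact ⟨w, hw, by rw [pow_succ, pow_mul]⟩
  refine (eq_bot_iff_forall K).2 fun k hk => hA k (hKA hk) fun n => ?_
  obtain ⟨v, hv, hvk⟩ := hroots n k hk
  exact ⟨v, hKA hv, hvk⟩

theorem hasNoInfinitePHeight_closure_triple {p : ℕ} {t w₂ w₃ : G} (ht : t ∈ center G)
    (hw₂ : w₂ ∈ center G) (htp : (zpowers t).HasNoInfinitePHeight p)
    (hw₂p : (zpowers w₂).HasNoInfinitePHeight p) (hw₃p : (zpowers w₃).HasNoInfinitePHeight p)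
    (hI₁ : zpowers t ⊓ closure {w₂, w₃} = ⊥) (hI₂ : zpowers w₂ ⊓ closure {t, w₃} = ⊥) :
    (closure {t, w₂, w₃}).HasNoInfinitePHeight p := by
  have hW : closure {w₂, w₃} = zpowers w₂ ⊔ zpowers w₃ := by
    rw [zpowers_eq_closure, zpowers_eq_closure, ← Subgroup.closure_union, Set.singleton_union]
  rw [← Set.singleton_union, Subgroup.closure_union, ← zpowers_eq_closure, hW]
  rw [hW] at hI₁
  refine htp.sup (hw₂p.sup hw₃p ?_ ?_) ?_ hI₁
  · exact (zpowers_le.2 hw₂).trans (center_le_centralizer _)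
  · refine le_bot_iff.1 (hI₂ ▸ inf_le_inf_left _ (zpowers_le.2 (subset_closure ?_)))
    simp
  · exact (zpowers_le.2 ht).trans (center_le_centralizer _)

theorem Subgroup.normal_of_le_center {H : Subgroup G} (h : H ≤ center G) : H.Normal :=
  ⟨fun a ha g => by rwa [mem_center_iff.1 (h ha) g, mul_inv_cancel_right]⟩

theorem commute_of_closure_eq_top {S : Set G} (hS : closure S = ⊤)
    (hcomm : ∀ a ∈ S, ∀ b ∈ S, Commute a b) (g g' : G) : Commute g g' := by
  have h : closure S ≤ centralizer (closure S) := by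
    rw [centralizer_closure]
    exact (closure_le _).2 fun a ha => mem_centralizer_iff.2 fun b hb => hcomm b hb a ha
  rw [hS] at h
  exact (mem_centralizer_iff.1 (h (mem_top g)) g' (mem_top g')).symm

theorem commutatorElement_eq_of_mem_center {x y : G} (h : x⁻¹ * y⁻¹ * x * y ∈ center G) :
    ⁅x, y⁆ = x⁻¹ * y⁻¹ * x * y := by
  calc ⁅x, y⁆ = (y * x) * (x⁻¹ * y⁻¹ * x * y) * (y * x)⁻¹ := by
        simp only [commutatorElement_def]; group
    _ = x⁻¹ * y⁻¹ * x * y := by rw [mem_center_iff.1 h, mul_inv_cancel_right]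

theorem commutator_le_zpowers_of_closure_eq_top {x y : G} {T : Set G}
    (hgen : closure (insert x (insert y T)) = ⊤) (hT : T ⊆ center G) (hc : ⁅x, y⁆ ∈ center G) :
    commutator G ≤ zpowers ⁅x, y⁆ := by
  have := normal_of_le_center (zpowers_le.2 hc)
  rw [← Normal.quotient_commutative_iff_commutator_le, isMulCommutative_iff]
  set q := QuotientGroup.mk' (zpowers ⁅x, y⁆)
  have hq : closure (q '' insert x (insert y T)) = ⊤ := by
    rw [← MonoidHom.map_closure, hgen, ← MonoidHom.range_eq_map, MonoidHom.range_eq_top]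
    exact QuotientGroup.mk'_surjective _
  have hxy : Commute (q x) (q y) := by
    rw [← commutatorElement_eq_one_iff_commute, ← map_commutatorElement, QuotientGroup.mk'_apply,
      QuotientGroup.eq_one_iff]
    exact mem_zpowers _
  have hcentral : ∀ a ∈ T, ∀ g, Commute (q a) g := fun a ha g => by
    obtain ⟨g, rfl⟩ := QuotientGroup.mk'_surjective _ g
    exact Commute.map (mem_center_iff.1 (hT ha) g).symm q
  refine commute_of_closure_eq_top hq ?_
  rintro - ⟨a, ha, rfl⟩ - ⟨b, hb, rfl⟩
  rcases ha with rfl | rfl | ha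
  · rcases hb with rfl | rfl | hb
    exacts [Commute.refl _, hxy, (hcentral b hb _).symm]
  · rcases hb with rfl | rfl | hb
    exacts [hxy.symm, Commute.refl _, (hcentral b hb _).symm]
  · exact hcentral a ha _

theorem zpowers_eq_of_mem_of_ne_one {p : ℕ} (hp : p.Prime) {c g : G} (hc : orderOf c = p)
    (hg : g ∈ zpowers c) (hg1 : g ≠ 1) : zpowers g = zpowers c := by
  have : Finite (zpowers c) :=
    Nat.finite_of_card_ne_zero (by rw [Nat.card_zpowers, hc]; exact hp.ne_zero)
  refine eq_of_le_of_card_ge (zpowers_le.2 hg) ?_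
  rw [Nat.card_zpowers, Nat.card_zpowers, hc]
  have := (Nat.dvd_prime hp).1 (hc ▸ orderOf_dvd_of_mem_zpowers hg)
  rw [orderOf_eq_one_iff] at this
  exact (this.resolve_left hg1).ge

theorem forall_commute_or_forall_commute {p : ℕ} (hp : p.Prime) {c : G} (hc : orderOf c = p)
    (hG : commutator G ≤ zpowers c) {H K : Subgroup G} (hdisj : H ⊓ K = ⊥) :
    (∀ a ∈ H, ∀ b ∈ H, Commute a b) ∨ ∀ a ∈ K, ∀ b ∈ K, Commute a b := by
  by_contra! ⟨⟨a, ha, a', ha', haa'⟩, b, hb, b', hb', hbb'⟩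
  have hmem (g g' : G) : ⁅g, g'⁆ ∈ zpowers c :=
    hG (commutator_def G ▸ commutator_mem_commutator (mem_top g) (mem_top g'))
  rw [← commutatorElement_eq_one_iff_commute] at haa' hbb'
  have hH : zpowers c ≤ H := by
    rw [← zpowers_eq_of_mem_of_ne_one hp hc (hmem a a') haa', zpowers_le]
    exact H.mul_mem (H.mul_mem (H.mul_mem ha ha') (H.inv_mem ha)) (H.inv_mem ha')
  have hK : ⁅b, b'⁆ ∈ K := K.mul_mem (K.mul_mem (K.mul_mem hb hb') (K.inv_mem hb)) (K.inv_mem hb')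
  exact hbb' (by simpa [hdisj] using mem_inf.2 ⟨hH (hmem b b'), hK⟩)

theorem le_center_of_forall_commute {H K : Subgroup G} (hHK : ∀ h ∈ H, ∀ k ∈ K, Commute h k)
    (hgen : ∀ g : G, ∃ h ∈ H, ∃ k ∈ K, g = h * k) (hK : ∀ a ∈ K, ∀ b ∈ K, Commute a b) :
    K ≤ center G := by
  intro k hk
  rw [mem_center_iff]
  intro g
  obtain ⟨h, hh, k', hk', rfl⟩ := hgen g
  exact ((hHK h hh k hk).symm.mul_right (hK k hk k' hk')).eq.symm

theorem exists_retraction_to_right_factor {H K : Subgroup G}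
    (hHK : ∀ h ∈ H, ∀ k ∈ K, Commute h k) (hdisj : H ⊓ K = ⊥)
    (hgen : ∀ g : G, ∃ h ∈ H, ∃ k ∈ K, g = h * k) :
    ∃ π : G →* G, (∀ g, π g ∈ K) ∧ ∀ k ∈ K, π k = k := by
  set f := H.subtype.noncommCoprod K.subtype fun a b => hHK a a.2 b b.2
  have hf : Function.Bijective f := by
    refine ⟨(MonoidHom.noncommCoprod_injective _ _ _).2 ⟨H.subtype_injective,
      K.subtype_injective, by simpa [disjoint_iff] using hdisj⟩, fun g => ?_⟩
    obtain ⟨h, hh, k, hk, rfl⟩ := hgen g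
    exact ⟨(⟨h, hh⟩, ⟨k, hk⟩), rfl⟩
  set e := MulEquiv.ofBijective f hf
  refine ⟨K.subtype.comp ((MonoidHom.snd H K).comp e.symm.toMonoidHom), fun g => Subtype.prop _,
    fun k hk => ?_⟩
  have : e.symm k = (1, ⟨k, hk⟩) := e.symm_apply_eq.2 (one_mul k).symm
  simp [this]

theorem exists_pow_eq_of_mem_closure_pow {p : ℕ} {S : Set G} (hS : S ⊆ center G) {z : G}
    (hz : z ∈ Subgroup.closure ((· ^ p) '' S)) : ∃ c ∈ Subgroup.closure S, c ^ p = z := by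
  induction hz using closure_induction with
  | mem z hz =>
    obtain ⟨c, hc, rfl⟩ := hz
    exact ⟨c, subset_closure hc, rfl⟩
  | one => exact ⟨1, one_mem _, one_pow p⟩
  | mul z z' _ _ ih ih' =>
    obtain ⟨c, hc, rfl⟩ := ih
    obtain ⟨c', hc', rfl⟩ := ih'
    refine ⟨c * c', mul_mem hc hc', Commute.mul_pow ?_ p⟩
    exact (mem_center_iff.1 ((closure_le _).2 hS hc) c').symm
  | inv z _ ih =>
    obtain ⟨c, hc, rfl⟩ := ih
    exact ⟨c⁻¹, inv_mem hc, inv_pow c p⟩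

theorem dvd_of_zpow_pow_eq_one {p n : ℕ} (hp : p ≠ 0) {t : G} (ht : orderOf t = p ^ (n + 1))
    {i : ℤ} (h : (t ^ i) ^ p ^ n = 1) : (p : ℤ) ∣ i := by
  rw [← zpow_natCast, ← zpow_mul, ← orderOf_dvd_iff_zpow_eq_one, ht, pow_succ, mul_comm i] at h
  push_cast at h
  exact (mul_dvd_mul_iff_left (pow_ne_zero n (Int.natCast_ne_zero.2 hp))).1 h

theorem exists_zpow_mul_eq_of_mem_closure_insert {t z : G} {S : Set G} (ht : t ∈ center G)
    (hz : z ∈ closure (insert t S)) : ∃ i : ℤ, ∃ w ∈ closure S, t ^ i * w = z := by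
  have := normal_of_le_center (zpowers_le.2 ht)
  rw [← Set.singleton_union, Subgroup.closure_union, ← zpowers_eq_closure,
    mem_sup_of_normal_left] at hz
  obtain ⟨-, ⟨i, rfl⟩, w, hw, rfl⟩ := hz
  exact ⟨i, w, hw, rfl⟩

theorem exists_pow_eq_apply_of_mem_closure {p : ℕ} {x y : G} {K : Subgroup G}
    (hKZ : K ≤ center G) {π : G →* G} (hπK : ∀ g, π g ∈ K) {w : G}
    (hw : w ∈ closure {x ^ p, y ^ p}) : ∃ v ∈ K, v ^ p = π w := by
  have hxy : {π x, π y} ⊆ (K : Set G) :=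
    Set.insert_subset_iff.2 ⟨hπK x, Set.singleton_subset_iff.2 (hπK y)⟩
  have hπw : π w ∈ Subgroup.closure ((· ^ p) '' {π x, π y}) := by
    rw [Set.image_pair, ← map_pow, ← map_pow, ← Set.image_pair, ← MonoidHom.map_closure]
    exact mem_map_of_mem π hw
  obtain ⟨v, hv, hvw⟩ := exists_pow_eq_of_mem_closure_pow (hxy.trans hKZ) hπw
  exact ⟨v, (closure_le K).2 hxy hv, hvw⟩

theorem exists_pow_eq_of_central_retraction {p n : ℕ} (hp : p.Prime) {x y t w₂ w₃ : G}
    (hZ : center G = closure {t, w₂, w₃}) (hI : zpowers t ⊓ closure {w₂, w₃} = ⊥)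
    (ht : orderOf t = p ^ (n + 1)) (hx : x ^ p = w₂) (hy : y ^ p = w₃) (hc : ⁅x, y⁆ = t ^ p ^ n)
    {K : Subgroup G} (hKZ : K ≤ center G) {π : G →* G} (hπK : ∀ g, π g ∈ K)
    (hπ : ∀ k ∈ K, π k = k) : ∀ k ∈ K, ∃ v ∈ K, v ^ p = k := by
  have htZ : t ∈ center G := hZ ▸ subset_closure (by simp)
  have hcomm : ∀ a ∈ center G, ∀ g, Commute a g := fun a ha g => (mem_center_iff.1 ha g).symm
  have hdecomp (z : G) (hz : z ∈ center G) : ∃ i : ℤ, ∃ w ∈ closure {w₂, w₃}, t ^ i * w = z :=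
    exists_zpow_mul_eq_of_mem_closure_insert htZ (hZ ▸ hz)
  have hπdecomp : ∀ k ∈ K, ∀ i : ℤ, ∀ w ∈ closure {w₂, w₃}, t ^ i * w = k →
      ∃ v ∈ K, π t ^ i * v ^ p = k := by
    rintro k hk i w hw rfl
    obtain ⟨v, hv, hvw⟩ := exists_pow_eq_apply_of_mem_closure hKZ hπK (hx ▸ hy ▸ hw)
    exact ⟨v, hv, by rw [hvw, ← map_zpow, ← map_mul, hπ _ hk]⟩
  have hpow {d : G} (hd : d ∈ K) (v : G) (j : ℤ) : (d ^ j * v) ^ p = (d ^ p) ^ j * v ^ p := by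
    rw [((hcomm d (hKZ hd) v).zpow_left j).mul_pow, ← zpow_natCast, ← zpow_mul, mul_comm,
      zpow_mul, zpow_natCast]
  -- `π t` is a `p`-th power because its `t`-coordinate is divisible by `p`
  obtain ⟨d, hd, hdt⟩ : ∃ d ∈ K, d ^ p = π t := by
    obtain ⟨i, w, hw, htw⟩ := hdecomp (π t) (hKZ (hπK t))
    have hπt : π t ^ p ^ n = 1 := by
      rw [← map_pow, ← hc, map_commutatorElement, commutatorElement_eq_one_iff_commute]
      exact hcomm _ (hKZ (hπK x)) _
    have hti : (t ^ i) ^ p ^ n = 1 := by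
      rw [← htw, ((hcomm t htZ w).zpow_left i).mul_pow] at hπt
      have : (t ^ i) ^ p ^ n ∈ zpowers t ⊓ closure {w₂, w₃} := by
        refine mem_inf.2 ⟨pow_mem (zpow_mem (mem_zpowers t) i) _, ?_⟩
        rw [eq_inv_of_mul_eq_one_left hπt]
        exact inv_mem (pow_mem hw _)
      simpa [hI] using this
    obtain ⟨i, rfl⟩ := dvd_of_zpow_pow_eq_one hp.ne_zero ht hti
    obtain ⟨v, hv, hvt⟩ := hπdecomp (π t) (hπK t) _ w hw htw
    refine ⟨π t ^ i * v, mul_mem (zpow_mem (hπK t) i) hv, ?_⟩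
    rw [hpow (hπK t), ← zpow_natCast, ← zpow_mul, hvt]
  intro k hk
  obtain ⟨j, w, hw, hkw⟩ := hdecomp k (hKZ hk)
  obtain ⟨v, hv, hkv⟩ := hπdecomp k hk j w hw hkw
  exact ⟨d ^ j * v, mul_mem (zpow_mem hd j) hv, by rw [hpow hd, hdt, hkv]⟩

theorem isIndecomposable_of_forall_central_retract_eq_bot
    (hG : ∀ H K : Subgroup G, H ⊓ K = ⊥ →
      (∀ a ∈ H, ∀ b ∈ H, Commute a b) ∨ ∀ a ∈ K, ∀ b ∈ K, Commute a b)
    (hret : ∀ (K : Subgroup G) (π : G →* G), K ≤ center G → (∀ g, π g ∈ K) →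
      (∀ k ∈ K, π k = k) → K = ⊥) :
    IsIndecomposable G := by
  have hfactor (H K : Subgroup G) (hHK : ∀ h ∈ H, ∀ k ∈ K, Commute h k) (hdisj : H ⊓ K = ⊥)
      (hgen : ∀ g : G, ∃ h ∈ H, ∃ k ∈ K, g = h * k) (hK : ∀ a ∈ K, ∀ b ∈ K, Commute a b) :
      K = ⊥ := by
    obtain ⟨π, hπK, hπ⟩ := exists_retraction_to_right_factor hHK hdisj hgen
    exact hret K π (le_center_of_forall_commute hHK hgen hK) hπK hπ
  intro H K hHK hdisj hgen
  rcases hG H K hdisj with hH | hK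
  · refine .inl (hfactor K H (fun k hk h hh => (hHK h hh k hk).symm) (inf_comm H K ▸ hdisj)
      (fun g => ?_) hH)
    obtain ⟨h, hh, k, hk, rfl⟩ := hgen g
    exact ⟨k, hk, h, hh, (hHK h hh k hk).eq⟩
  · exact .inr (hfactor H K hHK hdisj hgen hK)

theorem isIndecomposable_of_presentation {p m : ℕ} (hp : p.Prime) (hm : 1 ≤ m)
    {x y t w₂ w₃ : G} (hgen : closure {x, y, t, w₂, w₃} = ⊤)
    (hZ : center G = closure {t, w₂, w₃}) (hI₁ : zpowers t ⊓ closure {w₂, w₃} = ⊥)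
    (hI₂ : zpowers w₂ ⊓ closure {t, w₃} = ⊥) (ht : orderOf t = p ^ m)
    (hw₂ : (zpowers w₂).HasNoInfinitePHeight p) (hw₃ : (zpowers w₃).HasNoInfinitePHeight p)
    (hx : x ^ p = w₂) (hy : y ^ p = w₃) (hrel : x⁻¹ * y⁻¹ * x * y = t ^ p ^ (m - 1)) :
    IsIndecomposable G := by
  obtain ⟨n, rfl⟩ := Nat.exists_eq_add_of_le' hm
  rw [Nat.add_sub_cancel] at hrel
  have hcent : ({t, w₂, w₃} : Set G) ⊆ center G := hZ ▸ subset_closure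
  have htZ : t ∈ center G := hcent (by simp)
  have hc : ⁅x, y⁆ = t ^ p ^ n :=
    (commutatorElement_eq_of_mem_center (hrel ▸ pow_mem htZ _)).trans hrel
  have hcp : orderOf ⁅x, y⁆ = p := by
    rw [hc, orderOf_pow_of_dvd (pow_ne_zero n hp.ne_zero) (ht ▸ pow_dvd_pow p n.le_succ), ht,
      pow_succ, Nat.mul_div_cancel_left _ (pow_pos hp.pos n)]
  have hZp : (center G).HasNoInfinitePHeight p :=
    hZ ▸ hasNoInfinitePHeight_closure_triple htZ (hcent (by simp))
      (hasNoInfinitePHeight_zpowers_of_orderOf_eq ht) hw₂ hw₃ hI₁ hI₂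
  have hcomm : commutator G ≤ zpowers ⁅x, y⁆ :=
    commutator_le_zpowers_of_closure_eq_top hgen hcent (hc ▸ pow_mem htZ _)
  refine isIndecomposable_of_forall_central_retract_eq_bot
    (fun H K => forall_commute_or_forall_commute hp hcp hcomm) fun K π hKZ hπK hπ => ?_
  exact hZp.eq_bot_of_le hKZ
    (exists_pow_eq_of_central_retraction hp hZ hI₁ ht hx hy hc hKZ hπK hπ)

end

theorem familyG7_to_G9_indecomposable (p : ℕ) (hp : p.Prime) (G : Type*) [Group G]
    (h : (∃ m₁ m₂ m₃, 1 ≤ m₁ ∧ 1 ≤ m₂ ∧ 1 ≤ m₃ ∧ InFamilyG7 p m₁ m₂ m₃ G) ∨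
         (∃ m₁ m₂, 1 ≤ m₁ ∧ 1 ≤ m₂ ∧ InFamilyG8 p m₁ m₂ G) ∨
         (∃ m₁, 1 ≤ m₁ ∧ InFamilyG9 p m₁ G)) :
    IsIndecomposable G := by
  rcases h with
    ⟨m₁, _, _, hm₁, -, -, x, y, t₁, t₂, t₃, hgen, hZ, hI₁, hI₂, -, ht₁, ht₂, ht₃, hx, hy, hrel⟩ |
    ⟨m₁, _, hm₁, -, x, y, t₁, t₂, u₁, hgen, hZ, hI₁, hI₂, -, ht₁, ht₂, hu₁, hx, hy, hrel⟩ |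
    ⟨m₁, hm₁, x, y, t₁, u₁, u₂, hgen, hZ, hI₁, hI₂, -, ht₁, hu₁, hu₂, hx, hy, hrel⟩
  · exact isIndecomposable_of_presentation hp hm₁ hgen hZ hI₁ hI₂ ht₁
      (hasNoInfinitePHeight_zpowers_of_orderOf_eq ht₂)
      (hasNoInfinitePHeight_zpowers_of_orderOf_eq ht₃) hx hy hrel
  · exact isIndecomposable_of_presentation hp hm₁ hgen hZ hI₁ hI₂ ht₁
      (hasNoInfinitePHeight_zpowers_of_orderOf_eq ht₂)
      (hasNoInfinitePHeight_zpowers_of_not_isOfFinOrder hp.one_lt hu₁) hx hy hrel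
  · exact isIndecomposable_of_presentation hp hm₁ hgen hZ hI₁ hI₂ ht₁
      (hasNoInfinitePHeight_zpowers_of_not_isOfFinOrder hp.one_lt hu₁)
      (hasNoInfinitePHeight_zpowers_of_not_isOfFinOrder hp.one_lt hu₂) hx hy hrel
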